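/- arXiv:2410.06869 — 2 statements merged into one kernel-verified Lean document; each statement's English description precedes it below -/
import Mathlib

section
/- Let T be a densely defined closed EP operator on a complex Hilbert space H and let S be a bounded EP operator on H. Suppose there exist real numbers a, b with 0 < a < 1 and 0 < b < 1 such that ‖Sx‖ ≤ a‖Tx‖ for all x ∈ D(T) and ‖S*z‖ ≤ b‖T*z‖ for all z ∈ D(T*). Then the sum T + S, defined on the domain D(T) by x ↦ Tx + Sx, is a closed operator which is EP: its range is closed and R(T + S) = R((T + S)*). -/
/-!
The bound `‖S* z‖ ≤ b ‖T* z‖` gives `ker T* ⊆ ker S*`, hence `R(S) ⊆ R(T)` because `R(T)` is closed,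
and then also `R(S*) = R(S) ⊆ R(T) = R(T*)`.

If `A` has closed range, `R(B) ⊆ R(A)` and `‖B x‖ ≤ a ‖A x‖` with `a < 1`, then `R(A + B) = R(A)`:
for `y ∈ R(A)`, choosing preimages `A⁻¹` under `A`, the map `z ↦ y - B (A⁻¹ z)` is an
`a`-contraction of the complete space `R(A)`, and its fixed point `z` gives `(A + B) (A⁻¹ z) = y`.
Applied to `T + S` and to `(T + S)* = T* + S*`, this gives `R(T + S) = R(T) = R(T*) = R((T + S)*)`.
-/

open LinearPMap

variable {H : Type*} [NormedAddCommGroup H] [InnerProductSpace ℂ H] [CompleteSpace H]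

/-- The range of a densely defined (partial) operator, as a submodule of `H`. -/
noncomputable def pmRange (T : H →ₗ.[ℂ] H) : Submodule ℂ H := LinearMap.range T.toFun

/-- The sum `T + S` of a partial operator `T` and a bounded operator `S`, defined on `D(T)`
by `x ↦ T x + S x`. -/
noncomputable def pmAddL (T : H →ₗ.[ℂ] H) (S : H →L[ℂ] H) : H →ₗ.[ℂ] H where
  domain := T.domain
  toFun := T.toFun + (S : H →ₗ[ℂ] H) ∘ₗ T.domain.subtype

open scoped InnerProductSpace

omit [CompleteSpace H] in
theorem pmAddL_apply (T : H →ₗ.[ℂ] H) (S : H →L[ℂ] H) (x : T.domain) :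
    pmAddL T S x = T x + S (x : H) := rfl

omit [CompleteSpace H] in
theorem isClosed_graph_pmAddL {T : H →ₗ.[ℂ] H} (S : H →L[ℂ] H)
    (hT : IsClosed (T.graph : Set (H × H))) :
    IsClosed ((pmAddL T S).graph : Set (H × H)) := by
  have hgraph : ((pmAddL T S).graph : Set (H × H))
      = (fun p : H × H => (p.1, p.2 - S p.1)) ⁻¹' (T.graph : Set (H × H)) := by
    ext ⟨x, y⟩
    simp only [Set.mem_preimage, SetLike.mem_coe, mem_graph_iff]
    constructor
    · rintro ⟨u, rfl, rfl⟩
      exact ⟨u, rfl, eq_sub_of_add_eq (pmAddL_apply T S u).symm⟩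
    · rintro ⟨u, rfl, hu⟩
      exact ⟨u, rfl, (pmAddL_apply T S u).trans (eq_sub_iff_add_eq.mp hu)⟩
  rw [hgraph]
  exact hT.preimage (by fun_prop)

theorem pmRange_pmAddL_eq_of_norm_le {T : H →ₗ.[ℂ] H} {S : H →L[ℂ] H} {a : ℝ} (ha : a < 1)
    (hT : IsClosed ((pmRange T : Submodule ℂ H) : Set H))
    (hST : ∀ x : T.domain, ‖S (x : H)‖ ≤ a * ‖T x‖)
    (hS : LinearMap.range (S : H →ₗ[ℂ] H) ≤ pmRange T) :
    pmRange (pmAddL T S) = pmRange T := by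
  refine le_antisymm ?_ fun y hy => ?_
  · rintro _ ⟨x, rfl⟩
    exact add_mem ⟨x, rfl⟩ (hS ⟨x, rfl⟩)
  have : CompleteSpace (pmRange T) := hT.completeSpace_coe
  -- `pre` is any right inverse of `T`, possibly nonlinear: the contraction estimate only needs
  -- `T (pre w - pre z) = w - z`.
  choose pre hpre using fun z : pmRange T => LinearMap.mem_range.mp z.2
  simp only [toFun_eq_coe] at hpre
  let Φ : pmRange T → pmRange T := fun z => ⟨y - S (pre z), sub_mem hy (hS ⟨_, rfl⟩)⟩
  have hΦ : ContractingWith a.toNNReal Φ := by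
    refine ⟨Real.toNNReal_lt_one.mpr ha, LipschitzWith.of_dist_le_mul fun z w => ?_⟩
    calc dist (Φ z) (Φ w) = ‖S ((pre w - pre z : T.domain) : H)‖ := by
          rw [Subtype.dist_eq, dist_eq_norm]
          simp [Φ]
      _ ≤ a * ‖T (pre w - pre z)‖ := hST _
      _ = a * dist z w := by
          rw [LinearPMap.map_sub, hpre, hpre, dist_comm, Subtype.dist_eq, dist_eq_norm]
      _ ≤ a.toNNReal * dist z w := by gcongr; exact Real.le_coe_toNNReal a
  set z := hΦ.fixedPoint Φ
  have hz : y - S (pre z) = z := congrArg Subtype.val hΦ.fixedPoint_isFixedPt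
  exact ⟨pre z, show T (pre z) + S (pre z : H) = y by rw [hpre, ← hz, sub_add_cancel]⟩

theorem adjoint_pmAddL {T : H →ₗ.[ℂ] H} (S : H →L[ℂ] H) (hT : Dense (T.domain : Set H)) :
    (pmAddL T S)† = pmAddL T† (ContinuousLinearMap.adjoint S) := by
  have hdom : ∀ z, z ∈ (pmAddL T S)†.domain ↔ z ∈ T†.domain := by
    intro z
    have hS : Continuous fun x : T.domain => ⟪z, S x⟫_ℂ := by fun_prop
    have hsum : ⇑((innerₛₗ ℂ z).comp (pmAddL T S).toFun)
        = ⇑((innerₛₗ ℂ z).comp T.toFun) + fun x : T.domain => ⟪z, S x⟫_ℂ :=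
      funext fun x => inner_add_right z (T x) (S x)
    rw [mem_adjoint_domain_iff, mem_adjoint_domain_iff, hsum]
    exact ⟨fun h => (h.sub hS).congr fun x => add_sub_cancel_right _ _, fun h => h.add hS⟩
  refine LinearPMap.ext (Submodule.ext hdom) fun z hz hz' =>
    adjoint_apply_eq (T := pmAddL T S) hT _ fun x => ?_
  change ⟪T† ⟨z, hz'⟩ + ContinuousLinearMap.adjoint S z, x⟫_ℂ = ⟪z, T x + S x⟫_ℂ
  rw [inner_add_left, inner_add_right]
  exact congrArg₂ (· + ·) (adjoint_isFormalAdjoint hT _ _) (S.adjoint_inner_left _ _)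

theorem exists_adjoint_eq_zero_of_mem_orthogonal_pmRange {T : H →ₗ.[ℂ] H}
    (hT : Dense (T.domain : Set H)) {z : H} (hz : z ∈ (pmRange T)ᗮ) :
    ∃ hz' : z ∈ T†.domain, T† ⟨z, hz'⟩ = 0 := by
  have h0 : ∀ x : T.domain, ⟪(0 : H), x⟫_ℂ = ⟪z, T x⟫_ℂ := fun x =>
    (inner_zero_left _).trans
      (Submodule.inner_left_of_mem_orthogonal (LinearMap.mem_range_self _ x) hz).symm
  exact ⟨mem_adjoint_domain_of_exists z ⟨0, h0⟩, adjoint_apply_eq hT _ h0⟩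

theorem range_le_pmRange_of_norm_adjoint_le {T : H →ₗ.[ℂ] H} {S : H →L[ℂ] H} {b : ℝ}
    (hT : Dense (T.domain : Set H)) (hR : IsClosed ((pmRange T : Submodule ℂ H) : Set H))
    (hST : ∀ z : T†.domain, ‖ContinuousLinearMap.adjoint S (z : H)‖ ≤ b * ‖T† z‖) :
    LinearMap.range (S : H →ₗ[ℂ] H) ≤ pmRange T := by
  have : CompleteSpace (pmRange T) := hR.completeSpace_coe
  have hker : (pmRange T)ᗮ ≤ (LinearMap.range (S : H →ₗ[ℂ] H))ᗮ := fun z hz => by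
    obtain ⟨hz', hTz⟩ := exists_adjoint_eq_zero_of_mem_orthogonal_pmRange hT hz
    rw [S.orthogonal_range, LinearMap.mem_ker, ← norm_le_zero_iff]
    simpa [hTz] using hST ⟨z, hz'⟩
  calc LinearMap.range (S : H →ₗ[ℂ] H) ≤ (LinearMap.range (S : H →ₗ[ℂ] H))ᗮᗮ :=
        Submodule.le_orthogonal_orthogonal _
    _ ≤ (pmRange T)ᗮᗮ := Submodule.orthogonal_le hker
    _ = pmRange T := Submodule.orthogonal_orthogonal _

theorem stmt13_general (T : H →ₗ.[ℂ] H) (S : H →L[ℂ] H) (a b : ℝ)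
    (ha1 : a < 1) (hb1 : b < 1)
    (hdense : Dense (T.domain : Set H))
    (hclosed : IsClosed (T.graph : Set (H × H)))
    (hTrange : IsClosed ((pmRange T : Submodule ℂ H) : Set H))
    (hTEP : pmRange T = pmRange T.adjoint)
    (hSEP : LinearMap.range (S : H →ₗ[ℂ] H) = LinearMap.range ((ContinuousLinearMap.adjoint S : H →L[ℂ] H) : H →ₗ[ℂ] H))
    (hbound : ∀ x : T.domain, ‖S (x : H)‖ ≤ a * ‖T x‖)
    (hboundAdj : ∀ z : T.adjoint.domain,
      ‖ContinuousLinearMap.adjoint S (z : H)‖ ≤ b * ‖T.adjoint z‖) :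
    IsClosed ((pmAddL T S).graph : Set (H × H)) ∧
      IsClosed ((pmRange (pmAddL T S) : Submodule ℂ H) : Set H) ∧
      pmRange (pmAddL T S) = pmRange (pmAddL T S).adjoint := by
  have hST : LinearMap.range (S : H →ₗ[ℂ] H) ≤ pmRange T :=
    range_le_pmRange_of_norm_adjoint_le hdense hTrange hboundAdj
  have hRange : pmRange (pmAddL T S) = pmRange T :=
    pmRange_pmAddL_eq_of_norm_le ha1 hTrange hbound hST
  have hRangeAdj : pmRange (pmAddL T† (ContinuousLinearMap.adjoint S)) = pmRange T† :=
    pmRange_pmAddL_eq_of_norm_le hb1 (hTEP ▸ hTrange) hboundAdj (hSEP ▸ hTEP ▸ hST)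
  refine ⟨isClosed_graph_pmAddL S hclosed, hRange ▸ hTrange, ?_⟩
  rw [adjoint_pmAddL S hdense, hRange, hRangeAdj, hTEP]

/-- Let `T` be a densely defined closed EP operator on a complex Hilbert space `H` and `S`
a bounded EP operator on `H` such that `‖Sx‖ ≤ a‖Tx‖` for all `x ∈ D(T)` and
`‖S*z‖ ≤ b‖T*z‖` for all `z ∈ D(T*)`, where `0 < a < 1` and `0 < b < 1`.  Then `T + S`
(defined on `D(T)`) is a closed operator which is EP: its range is closed and
`R(T + S) = R((T + S)*)`. -/
theorem stmt13 (T : H →ₗ.[ℂ] H) (S : H →L[ℂ] H) (a b : ℝ)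
    (ha0 : 0 < a) (ha1 : a < 1) (hb0 : 0 < b) (hb1 : b < 1)
    (hdense : Dense (T.domain : Set H))
    (hclosed : IsClosed (T.graph : Set (H × H)))
    (hTrange : IsClosed ((pmRange T : Submodule ℂ H) : Set H))
    (hTEP : pmRange T = pmRange T.adjoint)
    (hSrange : IsClosed ((LinearMap.range (S : H →ₗ[ℂ] H) : Submodule ℂ H) : Set H))
    (hSEP : LinearMap.range (S : H →ₗ[ℂ] H) = LinearMap.range ((ContinuousLinearMap.adjoint S : H →L[ℂ] H) : H →ₗ[ℂ] H))
    (hbound : ∀ x : T.domain, ‖S (x : H)‖ ≤ a * ‖T x‖)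
    (hboundAdj : ∀ z : T.adjoint.domain,
      ‖ContinuousLinearMap.adjoint S (z : H)‖ ≤ b * ‖T.adjoint z‖) :
    IsClosed ((pmAddL T S).graph : Set (H × H)) ∧
      IsClosed ((pmRange (pmAddL T S) : Submodule ℂ H) : Set H) ∧
      pmRange (pmAddL T S) = pmRange (pmAddL T S).adjoint :=
  stmt13_general T S a b ha1 hb1 hdense hclosed hTrange hTEP hSEP hbound hboundAdj
end

section
/- Let T be a densely defined closed operator on a complex Hilbert space H with closed range. Then T is EP (i.e., R(T) = R(T*)) if and only if the following two conditions hold: (1) for every x ∈ H, the orthogonal projection P of x onto R(T)ᗮ lies in D(T) and T(Px) = 0; (2) for every x ∈ H, the orthogonal projection Q of x onto R(T*)ᗮ lies in D(T*) and T*(Qx) = 0. (Equivalently, T(I − TT†) = 0 and T*(I − T*(T*)†) = 0 on H, since TT† and T*(T*)† are the orthogonal projections onto R(T) and R(T*) respectively.) -/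
open LinearPMap

variable {H : Type*} [NormedAddCommGroup H] [InnerProductSpace ℂ H] [CompleteSpace H]

/-- `y` is the orthogonal projection of `x` onto the subspace `K`. -/
def IsOrthProjOn (K : Submodule ℂ H) (x y : H) : Prop := y ∈ K ∧ x - y ∈ Kᗮ

local notation "⟪" x ", " y "⟫" => @inner ℂ _ _ x y

omit [CompleteSpace H] in
lemma mem_pmRange {T : H →ₗ.[ℂ] H} {z : H} :
    z ∈ pmRange T ↔ ∃ x : T.domain, T x = z := LinearMap.mem_range

/-- (a) `R(T)ᗮ ⊆ N(T†)`. -/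
lemma lemA (T : H →ₗ.[ℂ] H) (hdense : Dense (T.domain : Set H)) {y : H}
    (hy : y ∈ (pmRange T)ᗮ) :
    ∃ h : y ∈ T.adjoint.domain, T.adjoint ⟨y, h⟩ = 0 := by
  have key : ∀ x : T.domain, ⟪(0 : H), (x : H)⟫ = ⟪y, T x⟫ := by
    intro x
    have h0 : ⟪T x, y⟫ = 0 :=
      (Submodule.mem_orthogonal _ _).mp hy (T x) (mem_pmRange.mpr ⟨x, rfl⟩)
    rw [inner_zero_left, ← inner_conj_symm, h0, _root_.map_zero]
  have hmem : y ∈ T.adjoint.domain := mem_adjoint_domain_of_exists y ⟨0, key⟩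
  exact ⟨hmem, adjoint_apply_eq hdense ⟨y, hmem⟩ key⟩

/-- (b) `N(T†) ⊆ R(T)ᗮ`. -/
lemma lemB (T : H →ₗ.[ℂ] H) (hdense : Dense (T.domain : Set H)) {v : H}
    (hv : v ∈ T.adjoint.domain) (hv0 : T.adjoint ⟨v, hv⟩ = 0) :
    v ∈ (pmRange T)ᗮ := by
  rw [Submodule.mem_orthogonal]
  rintro u hu
  obtain ⟨x, rfl⟩ := mem_pmRange.mp hu
  have h := adjoint_isFormalAdjoint hdense ⟨v, hv⟩ x
  rw [hv0, inner_zero_left] at h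
  rw [← inner_conj_symm, ← h, _root_.map_zero]

/-- (c) `N(T) ⊆ R(T†)ᗮ`. -/
lemma lemC (T : H →ₗ.[ℂ] H) (hdense : Dense (T.domain : Set H)) {x : H}
    (hx : x ∈ T.domain) (hx0 : T ⟨x, hx⟩ = 0) :
    x ∈ (pmRange T.adjoint)ᗮ := by
  rw [Submodule.mem_orthogonal]
  rintro u hu
  obtain ⟨v, rfl⟩ := mem_pmRange.mp hu
  have h := adjoint_isFormalAdjoint hdense v ⟨x, hx⟩
  rwa [hx0, inner_zero_right] at h

omit [CompleteSpace H] in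
lemma mem_graphL2 (T : H →ₗ.[ℂ] H) {z : WithLp 2 (H × H)} :
    z ∈ T.graph.comap ((WithLp.linearEquiv 2 ℂ (H × H) : WithLp 2 (H × H) ≃ₗ[ℂ] H × H) :
        WithLp 2 (H × H) →ₗ[ℂ] H × H) ↔ (z.fst, z.snd) ∈ T.graph := Iff.rfl

/-- (d) `R(T†)ᗮ ⊆ N(T)`, via closedness of the graph. -/
lemma lemD (T : H →ₗ.[ℂ] H) (hdense : Dense (T.domain : Set H))
    (hclosed : IsClosed (T.graph : Set (H × H))) {y : H}
    (hy : y ∈ (pmRange T.adjoint)ᗮ) :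
    ∃ h : y ∈ T.domain, T ⟨y, h⟩ = 0 := by
  set G : Submodule ℂ (WithLp 2 (H × H)) :=
    T.graph.comap ((WithLp.linearEquiv 2 ℂ (H × H) : WithLp 2 (H × H) ≃ₗ[ℂ] H × H) :
        WithLp 2 (H × H) →ₗ[ℂ] H × H) with hG
  have hGc : IsClosed (G : Set (WithLp 2 (H × H))) :=
    hclosed.preimage (WithLp.prodContinuousLinearEquiv 2 ℂ H H).continuous
  set z : WithLp 2 (H × H) := (WithLp.equiv 2 (H × H)).symm (y, 0) with hz
  have hmem : z ∈ G := by
    have h1 : G.topologicalClosure = G := SetLike.ext' hGc.closure_eq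
    rw [← h1, ← Submodule.orthogonal_orthogonal_eq_closure, Submodule.mem_orthogonal]
    intro w hw
    -- `w = (u, v)` with `v ∈ D(T†)` and `T† v = -u`
    have hval : ∀ x : T.domain, ⟪-w.fst, (x : H)⟫ = ⟪w.snd, T x⟫ := by
      intro x
      have hg : ((WithLp.equiv 2 (H × H)).symm ((x : H), T x)) ∈ G :=
        (mem_graphL2 T).mpr (T.mem_graph x)
      have h2 := (Submodule.mem_orthogonal _ _).mp hw _ hg
      rw [WithLp.prod_inner_apply, WithLp.equiv_symm_apply, WithLp.ofLp_toLp] at h2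
      change ⟪(x : H), w.fst⟫ + ⟪T x, w.snd⟫ = 0 at h2
      -- h2 : ⟪x, w.fst⟫ + ⟪T x, w.snd⟫ = 0
      have h3 := congrArg (starRingEnd ℂ) h2
      simp only [_root_.map_add, inner_conj_symm, RingHom.map_zero] at h3
      rw [inner_neg_left]
      linear_combination -h3
    have hvd : w.snd ∈ T.adjoint.domain :=
      mem_adjoint_domain_of_exists _ ⟨-w.fst, hval⟩
    have happ : T.adjoint ⟨w.snd, hvd⟩ = -w.fst := adjoint_apply_eq hdense _ hval
    have h4 : ⟪-w.fst, y⟫ = 0 :=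
      (Submodule.mem_orthogonal _ _).mp hy _ (mem_pmRange.mpr ⟨⟨w.snd, hvd⟩, happ⟩)
    rw [inner_neg_left, neg_eq_zero] at h4
    rw [WithLp.prod_inner_apply]
    show ⟪w.fst, y⟫ + ⟪w.snd, (0 : H)⟫ = 0
    rw [h4, inner_zero_right, add_zero]
  obtain ⟨x, hx1, hx2⟩ := T.mem_graph_iff.mp ((mem_graphL2 T).mp hmem)
  have hx1' : (x : H) = y := hx1
  refine ⟨hx1' ▸ x.2, ?_⟩
  have : (⟨y, hx1' ▸ x.2⟩ : T.domain) = x := Subtype.ext hx1'.symm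
  rw [this]
  exact hx2

omit [CompleteSpace H] in
lemma l2_norm_fst_le (g : WithLp 2 (H × H)) : ‖g.fst‖ ≤ ‖g‖ := by
  rw [WithLp.prod_norm_eq_of_L2]
  calc ‖g.fst‖ = Real.sqrt (‖g.fst‖ ^ 2) := (Real.sqrt_sq (norm_nonneg _)).symm
  _ ≤ Real.sqrt (‖g.fst‖ ^ 2 + ‖g.snd‖ ^ 2) :=
      Real.sqrt_le_sqrt (le_add_of_nonneg_right (by positivity))

/-- (e) if `y` is orthogonal to the kernel of `T`, then `y ∈ R(T†)`
(part of the closed range theorem). -/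
lemma lemE (T : H →ₗ.[ℂ] H)
    (hdense : Dense (T.domain : Set H))
    (hclosed : IsClosed (T.graph : Set (H × H)))
    (hrange : IsClosed ((pmRange T : Submodule ℂ H) : Set H))
    {y : H} (hker : ∀ x : T.domain, T x = 0 → ⟪y, (x : H)⟫ = 0) :
    y ∈ pmRange T.adjoint := by
  -- well-definedness of the functional `T x ↦ ⟪y, x⟫`
  have wd : ∀ x x' : T.domain, T x = T x' → ⟪y, (x : H)⟫ = ⟪y, (x' : H)⟫ := by
    intro x x' hxx
    have h0 : T (x - x') = 0 := by
      rw [LinearPMap.map_sub, sub_eq_zero]; exact hxx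
    have := hker (x - x') h0
    rw [Submodule.coe_sub, inner_sub_right, sub_eq_zero] at this
    exact this
  set f0 : pmRange T → ℂ := fun z => ⟪y, ((mem_pmRange.mp z.2).choose : H)⟫ with hf0
  have f0_eval : ∀ (z : pmRange T) (x : T.domain), T x = (z : H) → f0 z = ⟪y, (x : H)⟫ := by
    intro z x hx
    exact wd _ x ((mem_pmRange.mp z.2).choose_spec.trans hx.symm)
  let φlin : pmRange T →ₗ[ℂ] ℂ :=
    { toFun := f0
      map_add' := by
        intro z₁ z₂
        show f0 (z₁ + z₂) = f0 z₁ + f0 z₂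
        obtain ⟨x₁, hx₁⟩ := mem_pmRange.mp z₁.2
        obtain ⟨x₂, hx₂⟩ := mem_pmRange.mp z₂.2
        rw [f0_eval z₁ x₁ hx₁, f0_eval z₂ x₂ hx₂,
          f0_eval (z₁ + z₂) (x₁ + x₂) (by rw [LinearPMap.map_add, hx₁, hx₂]; rfl),
          Submodule.coe_add, inner_add_right]
      map_smul' := by
        intro c z
        show f0 (c • z) = c • f0 z
        obtain ⟨x, hx⟩ := mem_pmRange.mp z.2
        have hcx : T (c • x) = ((c • z : pmRange T) : H) := by
          rw [LinearPMap.map_smul, hx]; rfl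
        rw [f0_eval z x hx, f0_eval (c • z) (c • x) hcx,
          Submodule.coe_smul, inner_smul_right]
        rfl }
  -- the graph as a complete subspace of `WithLp 2 (H × H)`
  set G : Submodule ℂ (WithLp 2 (H × H)) :=
    T.graph.comap ((WithLp.linearEquiv 2 ℂ (H × H) : WithLp 2 (H × H) ≃ₗ[ℂ] H × H) :
        WithLp 2 (H × H) →ₗ[ℂ] H × H) with hG
  have hGc : IsClosed (G : Set (WithLp 2 (H × H))) :=
    hclosed.preimage (WithLp.prodContinuousLinearEquiv 2 ℂ H H).continuous
  haveI : CompleteSpace G := hGc.completeSpace_coe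
  haveI : CompleteSpace (pmRange T) := hrange.completeSpace_coe
  -- the projection from the graph onto the range is surjective
  let S : G →L[ℂ] H :=
    ((ContinuousLinearMap.snd ℂ H H).comp
      (WithLp.prodContinuousLinearEquiv 2 ℂ H H).toContinuousLinearMap).comp G.subtypeL
  have hSval : ∀ g : G, S g = (g : WithLp 2 (H × H)).snd := fun g => rfl
  have hSmem : ∀ g : G, S g ∈ pmRange T := by
    rintro ⟨g, hg⟩
    obtain ⟨x, hx1, hx2⟩ := T.mem_graph_iff.mp ((mem_graphL2 T).mp hg)
    exact mem_pmRange.mpr ⟨x, hx2⟩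
  let S' : G →L[ℂ] pmRange T := S.codRestrict _ hSmem
  have hsurj : Function.Surjective S' := by
    rintro ⟨z, hz⟩
    obtain ⟨x, hx⟩ := mem_pmRange.mp hz
    refine ⟨⟨(WithLp.equiv 2 (H × H)).symm ((x : H), T x), (mem_graphL2 T).mpr (T.mem_graph x)⟩, ?_⟩
    apply Subtype.ext
    simpa [S', hSval] using hx
  obtain ⟨C, hCpos, hC⟩ := S'.exists_preimage_norm_le hsurj
  -- the functional is bounded
  have hbound : ∀ z : pmRange T, ‖φlin z‖ ≤ (C * ‖y‖) * ‖z‖ := by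
    intro z
    obtain ⟨g, hg1, hg2⟩ := hC z
    obtain ⟨x, hx1, hx2⟩ := T.mem_graph_iff.mp ((mem_graphL2 T).mp g.2)
    have hz : T x = (z : H) := by
      rw [hx2]; exact congrArg Subtype.val hg1
    show ‖f0 z‖ ≤ (C * ‖y‖) * ‖z‖
    rw [f0_eval z x hz]
    have hxg : ‖(x : H)‖ ≤ ‖(g : WithLp 2 (H × H))‖ := by
      rw [hx1]; exact l2_norm_fst_le _
    calc ‖⟪y, (x : H)⟫‖ ≤ ‖y‖ * ‖(x : H)‖ := norm_inner_le_norm _ _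
    _ ≤ ‖y‖ * (C * ‖z‖) := by
        refine mul_le_mul_of_nonneg_left (hxg.trans hg2) (norm_nonneg _)
    _ = (C * ‖y‖) * ‖z‖ := by ring
  let φ : pmRange T →L[ℂ] ℂ := φlin.mkContinuous (C * ‖y‖) hbound
  let F : H →L[ℂ] ℂ := φ.comp ((pmRange T).orthogonalProjectionOnto : H →L[ℂ] pmRange T)
  set w : H := (InnerProductSpace.toDual ℂ H).symm F with hw
  have hkey : ∀ x : T.domain, ⟪y, (x : H)⟫ = ⟪w, T x⟫ := by
    intro x
    have h1 : ⟪w, T x⟫ = F (T x) := InnerProductSpace.toDual_symm_apply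
    have h2 : (pmRange T).orthogonalProjectionOnto (T x) = ⟨T x, mem_pmRange.mpr ⟨x, rfl⟩⟩ :=
      Submodule.orthogonalProjectionOnto_mem_subspace_eq_self (⟨T x, mem_pmRange.mpr ⟨x, rfl⟩⟩ : pmRange T)
    have h3 : F (T x) = φlin ⟨T x, mem_pmRange.mpr ⟨x, rfl⟩⟩ := by
      show φ ((pmRange T).orthogonalProjectionOnto (T x)) = _
      rw [h2]; rfl
    rw [h1, h3]
    exact (f0_eval ⟨T x, mem_pmRange.mpr ⟨x, rfl⟩⟩ x rfl).symm
  have hwd : w ∈ T.adjoint.domain := mem_adjoint_domain_of_exists w ⟨y, hkey⟩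
  exact mem_pmRange.mpr ⟨⟨w, hwd⟩, adjoint_apply_eq hdense _ hkey⟩

/-- Let `T` be a densely defined closed operator on a complex Hilbert space `H` with closed
range.  Then `T` is EP (`R(T) = R(T*)`) if and only if:
(1) for every `x ∈ H`, the orthogonal projection `y` of `x` onto `R(T)ᗮ` lies in `D(T)` and
`T y = 0` (i.e. `T (I - TT†) = 0`), and
(2) for every `x ∈ H`, the orthogonal projection `y` of `x` onto `R(T*)ᗮ` lies in `D(T*)` and
`T* y = 0` (i.e. `T* (I - T*(T*)†) = 0`). -/
theorem stmt14 (T : H →ₗ.[ℂ] H)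
    (hdense : Dense (T.domain : Set H))
    (hclosed : IsClosed (T.graph : Set (H × H)))
    (hrange : IsClosed ((pmRange T : Submodule ℂ H) : Set H)) :
    pmRange T = pmRange T.adjoint ↔
      ((∀ x y : H, IsOrthProjOn (pmRange T)ᗮ x y →
          ∃ h : y ∈ T.domain, T ⟨y, h⟩ = 0) ∧
       (∀ x y : H, IsOrthProjOn (pmRange T.adjoint)ᗮ x y →
          ∃ h : y ∈ T.adjoint.domain, T.adjoint ⟨y, h⟩ = 0)) := by
  constructor
  · intro hEP
    constructor
    · rintro x y ⟨hy, -⟩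
      rw [hEP] at hy
      exact lemD T hdense hclosed hy
    · rintro x y ⟨hy, -⟩
      rw [← hEP] at hy
      exact lemA T hdense hy
  · rintro ⟨h1, h2⟩
    have h1' : ∀ y ∈ (pmRange T)ᗮ, ∃ h : y ∈ T.domain, T ⟨y, h⟩ = 0 := fun y hy =>
      h1 y y ⟨hy, by rw [sub_self]; exact zero_mem _⟩
    have h2' : ∀ y ∈ (pmRange T.adjoint)ᗮ,
        ∃ h : y ∈ T.adjoint.domain, T.adjoint ⟨y, h⟩ = 0 := fun y hy =>
      h2 y y ⟨hy, by rw [sub_self]; exact zero_mem _⟩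
    haveI : CompleteSpace (pmRange T) := hrange.completeSpace_coe
    apply le_antisymm
    · -- `R(T) ≤ R(T†)`
      intro z hz
      apply lemE T hdense hclosed hrange
      intro x hx0
      have hx0' : T ⟨(x : H), x.2⟩ = 0 := by rwa [Subtype.eta]
      have hxo : (x : H) ∈ (pmRange T.adjoint)ᗮ := lemC T hdense x.2 hx0'
      obtain ⟨hxd, hxa⟩ := h2' (x : H) hxo
      have hxr : (x : H) ∈ (pmRange T)ᗮ := lemB T hdense hxd hxa
      exact (Submodule.mem_orthogonal _ _).mp hxr z hz
    · -- `R(T†) ≤ R(T)`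
      intro z hz
      obtain ⟨v, rfl⟩ := mem_pmRange.mp hz
      rw [← Submodule.orthogonal_orthogonal (pmRange T), Submodule.mem_orthogonal]
      intro u hu
      obtain ⟨hud, hu0⟩ := h1' u hu
      have h := adjoint_isFormalAdjoint hdense v ⟨u, hud⟩
      rw [hu0, inner_zero_right] at h
      have h' := congrArg (starRingEnd ℂ) h
      rw [inner_conj_symm, RingHom.map_zero] at h'
      exact h'
end
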